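/- Let β > 0, b ∈ (0,∞), L > 0, α ≥ 0, and g_k, u_k ∈ ℝ. A real number u with |u| ≤ b is a global minimizer of u ↦ g_k·u + (L/2)(u - u_k)² + (α/2)u² + β|u|₀ over {|u| ≤ b} if and only if u ∈ H_{β/(L+α), b}((L·u_k - g_k)/(L+α)). Moreover, every such global minimizer u satisfies u = 0 or |u| ≥ σ, where σ := min(b, √(2β/(L+α))). -/

import Mathlib

/-- The "L⁰ norm" of a real number: 0 if `u = 0`, else 1. -/
noncomputable def nrm0 (u : ℝ) : ℝ := if u = 0 then 0 else 1

/-- `H_{s,b}(q)`: the set of global minimizers of `v ↦ -q·v + v²/2 + s·|v|₀`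
over `{v : |v| ≤ b}`. -/
def Hsb (s b q : ℝ) : Set ℝ :=
  {u | |u| ≤ b ∧ ∀ v : ℝ, |v| ≤ b →
        -q * u + u ^ 2 / 2 + s * nrm0 u ≤ -q * v + v ^ 2 / 2 + s * nrm0 v}

/-!
Completing the square, the proximal objective is `(L + α)` times the objective defining
`H_{β/(L+α), b}((L uₖ - gₖ)/(L+α))` plus a constant, so both have the same minimizers.
For the gap, let `u ≠ 0` be a minimizer with `|u| < m := min b √(2s)`. Comparing `u` with `0`
gives `s ≤ q u - u²/2`; comparing it with the rescaled point `(m/|u|) u`, which has the same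
`|·|₀` and is still feasible, gives `q u ≤ (m/|u| + 1) u²/2`. Together `s ≤ m |u| / 2 < m²/2 ≤ s`.
-/

lemma nrm0_zero : nrm0 0 = 0 := if_pos rfl

lemma nrm0_of_ne_zero {u : ℝ} (h : u ≠ 0) : nrm0 u = 1 := if_neg h

theorem min_le_abs_of_mem_Hsb {s b q u : ℝ} (hu : u ∈ Hsb s b q) (h0 : u ≠ 0) :
    min b √(2 * s) ≤ |u| := by
  by_contra! hlt
  set m := min b √(2 * s)
  have hu_pos : 0 < |u| := abs_pos.2 h0
  have hm_pos : 0 < m := hu_pos.trans hlt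
  have hm_sq : m ^ 2 ≤ 2 * s := (Real.le_sqrt' hm_pos).1 (min_le_right _ _)
  set r := m / |u|
  have hr : 1 < r := (one_lt_div hu_pos).2 hlt
  have hru : r * u ^ 2 = m * |u| := by
    rw [← sq_abs u, sq, ← mul_assoc, div_mul_cancel₀ _ hu_pos.ne']
  have h_zero := hu.2 0 (by simpa using (abs_nonneg u).trans hu.1)
  have h_scaled := hu.2 (r * u) <| by
    rw [abs_mul, abs_of_pos (by positivity), div_mul_cancel₀ _ hu_pos.ne']
    exact min_le_left _ _
  rw [nrm0_of_ne_zero h0, nrm0_zero] at h_zero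
  rw [nrm0_of_ne_zero h0, nrm0_of_ne_zero (mul_ne_zero (by positivity) h0)] at h_scaled
  have hqu : q * u ≤ (r + 1) / 2 * u ^ 2 := by
    refine le_of_mul_le_mul_left ?_ (sub_pos.2 hr)
    nlinarith
  nlinarith [mul_lt_mul_of_pos_left hlt hm_pos]

lemma prox_objective_eq (β L α gk uk v : ℝ) (hc : L + α ≠ 0) :
    gk * v + L / 2 * (v - uk) ^ 2 + α / 2 * v ^ 2 + β * nrm0 v =
      (L + α) * (-((L * uk - gk) / (L + α)) * v + v ^ 2 / 2 + β / (L + α) * nrm0 v) +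
        L / 2 * uk ^ 2 := by
  field_simp
  ring

theorem prox_step_characterization_general (β b L α gk uk u : ℝ)
    (hL : 0 < L) (hα : 0 ≤ α) (hu : |u| ≤ b) :
    ((∀ v : ℝ, |v| ≤ b →
        gk * u + L / 2 * (u - uk) ^ 2 + α / 2 * u ^ 2 + β * nrm0 u ≤
          gk * v + L / 2 * (v - uk) ^ 2 + α / 2 * v ^ 2 + β * nrm0 v) ↔
      u ∈ Hsb (β / (L + α)) b ((L * uk - gk) / (L + α))) ∧
    ((∀ v : ℝ, |v| ≤ b →
        gk * u + L / 2 * (u - uk) ^ 2 + α / 2 * u ^ 2 + β * nrm0 u ≤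
          gk * v + L / 2 * (v - uk) ^ 2 + α / 2 * v ^ 2 + β * nrm0 v) →
      u = 0 ∨ min b (Real.sqrt (2 * β / (L + α))) ≤ |u|) := by
  have hc : 0 < L + α := by linarith
  have h_le_iff : ∀ v,
      gk * u + L / 2 * (u - uk) ^ 2 + α / 2 * u ^ 2 + β * nrm0 u ≤
          gk * v + L / 2 * (v - uk) ^ 2 + α / 2 * v ^ 2 + β * nrm0 v ↔
        -((L * uk - gk) / (L + α)) * u + u ^ 2 / 2 + β / (L + α) * nrm0 u ≤
          -((L * uk - gk) / (L + α)) * v + v ^ 2 / 2 + β / (L + α) * nrm0 v := fun v => by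
    rw [prox_objective_eq β L α gk uk u hc.ne', prox_objective_eq β L α gk uk v hc.ne',
      add_le_add_iff_right, mul_le_mul_iff_right₀ hc]
  have h_min_iff : (∀ v : ℝ, |v| ≤ b →
      gk * u + L / 2 * (u - uk) ^ 2 + α / 2 * u ^ 2 + β * nrm0 u ≤
        gk * v + L / 2 * (v - uk) ^ 2 + α / 2 * v ^ 2 + β * nrm0 v) ↔
      u ∈ Hsb (β / (L + α)) b ((L * uk - gk) / (L + α)) :=
    ⟨fun h => ⟨hu, fun v hv => (h_le_iff v).1 (h v hv)⟩,
      fun h v hv => (h_le_iff v).2 (h.2 v hv)⟩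
  refine ⟨h_min_iff, fun h => or_iff_not_imp_left.2 fun h0 => ?_⟩
  rw [mul_div_assoc]
  exact min_le_abs_of_mem_Hsb (h_min_iff.1 h) h0

/-- Characterization of the proximal step: `u` (with `|u| ≤ b`) is a global minimizer of
`u ↦ g_k·u + (L/2)(u - u_k)² + (α/2)u² + β|u|₀` over `{|u| ≤ b}` iff
`u ∈ H_{β/(L+α),b}((L u_k - g_k)/(L+α))`; moreover every global minimizer `u`
satisfies `u = 0` or `|u| ≥ σ` with `σ = min(b, √(2β/(L+α)))`. -/
theorem prox_step_characterization (β b L α gk uk u : ℝ)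
    (hβ : 0 < β) (hb : 0 < b) (hL : 0 < L) (hα : 0 ≤ α) (hu : |u| ≤ b) :
    ((∀ v : ℝ, |v| ≤ b →
        gk * u + L / 2 * (u - uk) ^ 2 + α / 2 * u ^ 2 + β * nrm0 u ≤
          gk * v + L / 2 * (v - uk) ^ 2 + α / 2 * v ^ 2 + β * nrm0 v) ↔
      u ∈ Hsb (β / (L + α)) b ((L * uk - gk) / (L + α))) ∧
    ((∀ v : ℝ, |v| ≤ b →
        gk * u + L / 2 * (u - uk) ^ 2 + α / 2 * u ^ 2 + β * nrm0 u ≤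
          gk * v + L / 2 * (v - uk) ^ 2 + α / 2 * v ^ 2 + β * nrm0 v) →
      u = 0 ∨ min b (Real.sqrt (2 * β / (L + α))) ≤ |u|) :=
  prox_step_characterization_general β b L α gk uk u hL hα hu
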